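/- Suppose m_1 = ... = m_t = m and C ≤ Π is a nonzero MSRD code of minimum sum-rank distance d. For all tuples U = (U_1,...,U_t) of subspaces U_i ≤ F_q^{n_i} with total dimension u = Σ dim(U_i): |C(U)| = 1 if u < d, and |C(U)| = q^{m(u−d+1)} if u ≥ d. -/

import Mathlib

/-!
Write `Π(U)` for the space of tuples whose `i`-th block has all its columns in `U i`; it has
dimension `m u`, and `C(U) = C ∩ Π(U)`. Elements of `Π(U)` have sum-rank at most `u`, so for
`u < d` the only codeword in it is `0`. For `u ≥ d`, the dimension formula for `C ∩ Π(U)` inside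
the ambient space of dimension `m N` gives `dim C(U) ≥ m(N - d + 1) + m u - m N = m(u - d + 1)`.
Conversely, shrink `U` to `U' ≤ U` of total dimension `d - 1`: then `C(U') = 0`, and
`dim C(U) - dim C(U') ≤ dim Π(U) - dim Π(U') = m(u - d + 1)`.
-/

open Matrix Finset

/-- The sum-rank of a tuple of matrices. -/
noncomputable def srk {Fq : Type*} [Field Fq] {t : ℕ} {n m : Fin t → ℕ}
    (X : ∀ i, Matrix (Fin (n i)) (Fin (m i)) Fq) : ℕ :=
  ∑ i, (X i).rank

/-- The column space of a matrix. -/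
noncomputable def colsp {Fq : Type*} [Field Fq] {a b : ℕ}
    (X : Matrix (Fin a) (Fin b) Fq) : Submodule Fq (Fin a → Fq) :=
  LinearMap.range X.mulVecLin

/-- The shortening `C(U)` of a code on a tuple of subspaces `U`. -/
def shorten {Fq : Type*} [Field Fq] {t : ℕ} {n m : Fin t → ℕ}
    (C : Set (∀ i, Matrix (Fin (n i)) (Fin (m i)) Fq))
    (U : ∀ i, Submodule Fq (Fin (n i) → Fq)) :
    Set (∀ i, Matrix (Fin (n i)) (Fin (m i)) Fq) :=
  {X ∈ C | ∀ i, colsp (X i) ≤ U i}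

open Module

theorem Nat.exists_le_sum_eq {ι : Type*} [Fintype ι] (u : ι → ℕ) {s : ℕ}
    (hs : s ≤ ∑ i, u i) : ∃ w ≤ u, ∑ i, w i = s := by
  classical
  induction s with
  | zero => exact ⟨0, fun i => Nat.zero_le _, by simp⟩
  | succ s ih =>
    obtain ⟨w, hwu, hw⟩ := ih (by omega)
    obtain ⟨i, hi⟩ : ∃ i, w i < u i := by
      by_contra! h
      have := Finset.sum_le_sum fun i (_ : i ∈ univ) => h i
      omega
    refine ⟨Function.update w i (w i + 1), fun k => ?_, ?_⟩
    · rcases eq_or_ne k i with rfl | hk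
      · simpa using hi
      · simpa [Function.update_of_ne hk] using hwu k
    · rw [Finset.sum_update_of_mem (mem_univ i), ← hw,
        Finset.sum_eq_sum_sdiff_singleton_add (mem_univ i) w]
      omega

section FiniteDimensional

variable {K V : Type*} [Field K] [AddCommGroup V] [Module K V]

theorem Submodule.exists_le_finrank_eq (W : Submodule K V) {k : ℕ} (hk : k ≤ finrank K W) :
    ∃ W' ≤ W, finrank K W' = k := by
  obtain ⟨f, hf⟩ := exists_linearIndependent_of_le_finrank hk
  refine ⟨(Submodule.span K (Set.range f)).map W.subtype, Submodule.map_subtype_le _ _, ?_⟩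
  rw [Submodule.finrank_map_subtype_eq, finrank_span_eq_card hf, Fintype.card_fin]

variable [FiniteDimensional K V]

theorem Submodule.finrank_add_finrank_le_finrank_add_finrank_inf (A B : Submodule K V) :
    finrank K A + finrank K B ≤ finrank K V + finrank K ↥(A ⊓ B) := by
  rw [← Submodule.finrank_sup_add_finrank_inf_eq]
  exact Nat.add_le_add_right (Submodule.finrank_le _) _

theorem Submodule.finrank_inf_add_finrank_le_of_le (A : Submodule K V) {B B' : Submodule K V}
    (hB : B ≤ B') :
    finrank K ↥(A ⊓ B') + finrank K B ≤ finrank K ↥(A ⊓ B) + finrank K B' := by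
  have hinf : A ⊓ B' ⊓ B = A ⊓ B := by rw [inf_assoc, inf_eq_right.2 hB]
  rw [← Submodule.finrank_sup_add_finrank_inf_eq, hinf, add_comm]
  exact Nat.add_le_add_left (Submodule.finrank_mono (sup_le inf_le_right hB)) _

end FiniteDimensional

section Matrix

variable {K : Type*} [Field K] {a b : ℕ}

theorem colsp_le_iff {X : Matrix (Fin a) (Fin b) K} {W : Submodule K (Fin a → K)} :
    colsp X ≤ W ↔ ∀ j, X.col j ∈ W := by
  rw [colsp, range_mulVecLin, Submodule.span_le, Set.range_subset_iff]
  rfl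

theorem Matrix.rank_eq_zero_iff {X : Matrix (Fin a) (Fin b) K} : X.rank = 0 ↔ X = 0 := by
  change finrank K (colsp X) = 0 ↔ X = 0
  rw [Submodule.finrank_eq_zero, ← le_bot_iff, colsp_le_iff]
  simp only [Submodule.mem_bot]
  exact ⟨fun h => Matrix.ext_col h, fun h j => by subst h; rfl⟩

end Matrix

section Tuples

variable {K : Type*} [Field K] {t : ℕ} {n m : Fin t → ℕ}

theorem srk_eq_zero_iff {X : ∀ i, Matrix (Fin (n i)) (Fin (m i)) K} : srk X = 0 ↔ X = 0 := by
  simp only [srk, Finset.sum_eq_zero_iff, mem_univ, true_imp_iff, Matrix.rank_eq_zero_iff,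
    funext_iff, Pi.zero_apply]

/-- The paper's `Π(U)`, so that the shortening `C(U)` is `C ⊓ Π(U)`. -/
def colspWithin (U : ∀ i, Submodule K (Fin (n i) → K)) :
    Submodule K (∀ i, Matrix (Fin (n i)) (Fin (m i)) K) where
  carrier := {X | ∀ i, colsp (X i) ≤ U i}
  add_mem' hX hY i :=
    colsp_le_iff.2 fun j => add_mem (colsp_le_iff.1 (hX i) j) (colsp_le_iff.1 (hY i) j)
  zero_mem' _ := colsp_le_iff.2 fun _ => zero_mem _
  smul_mem' c _ hX i := colsp_le_iff.2 fun j => Submodule.smul_mem _ c (colsp_le_iff.1 (hX i) j)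

variable {U : ∀ i, Submodule K (Fin (n i) → K)}

theorem shorten_eq_inf_colspWithin (C : Submodule K (∀ i, Matrix (Fin (n i)) (Fin (m i)) K)) :
    shorten (C : Set (∀ i, Matrix (Fin (n i)) (Fin (m i)) K)) U = ↑(C ⊓ colspWithin U) := rfl

theorem colspWithin_mono {U' : ∀ i, Submodule K (Fin (n i) → K)} (h : ∀ i, U' i ≤ U i) :
    colspWithin (m := m) U' ≤ colspWithin U :=
  fun _ hX i => (hX i).trans (h i)

def colspWithinEquivCols (U : ∀ i, Submodule K (Fin (n i) → K)) :
    colspWithin (m := m) U ≃ₗ[K] ∀ i, Fin (m i) → U i where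
  toFun X i j := ⟨(X.1 i).col j, colsp_le_iff.1 (X.2 i) j⟩
  invFun Y := ⟨fun i => Matrix.of fun r j => (Y i j : Fin (n i) → K) r,
    fun i => colsp_le_iff.2 fun j => (Y i j).2⟩
  map_add' _ _ := rfl
  map_smul' _ _ := rfl
  left_inv _ := rfl
  right_inv _ := rfl

theorem finrank_colspWithin :
    finrank K (colspWithin (m := m) U) = ∑ i, m i * finrank K (U i) := by
  rw [(colspWithinEquivCols U).finrank_eq, finrank_pi_fintype]
  simp [finrank_pi_fintype]

theorem srk_le_of_mem_colspWithin {X : ∀ i, Matrix (Fin (n i)) (Fin (m i)) K}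
    (hX : X ∈ colspWithin U) : srk X ≤ ∑ i, finrank K (U i) :=
  Finset.sum_le_sum fun i _ => Submodule.finrank_mono (hX i)

theorem finrank_matrixTuple :
    finrank K (∀ i, Matrix (Fin (n i)) (Fin (m i)) K) = ∑ i, n i * m i := by
  simp [finrank_pi_fintype, finrank_matrix]

theorem exists_le_sum_finrank_eq (U : ∀ i, Submodule K (Fin (n i) → K)) {s : ℕ}
    (hs : s ≤ ∑ i, finrank K (U i)) : ∃ U' : ∀ i, Submodule K (Fin (n i) → K),
      (∀ i, U' i ≤ U i) ∧ ∑ i, finrank K (U' i) = s := by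
  obtain ⟨w, hwU, hw⟩ := Nat.exists_le_sum_eq _ hs
  choose U' hU'U hU' using fun i => (U i).exists_le_finrank_eq (hwU i)
  exact ⟨U', hU'U, by simp only [hU', hw]⟩

theorem inf_colspWithin_eq_bot {C : Submodule K (∀ i, Matrix (Fin (n i)) (Fin (m i)) K)} {d : ℕ}
    (hmin : ∀ X ∈ C, X ≠ 0 → d ≤ srk X) (hU : ∑ i, finrank K (U i) < d) :
    C ⊓ colspWithin U = ⊥ := by
  refine (Submodule.eq_bot_iff _).2 fun X ⟨hXC, hXU⟩ => ?_
  by_contra hX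
  have := hmin X hXC hX
  have := srk_le_of_mem_colspWithin hXU
  omega

end Tuples

section UniformColumns

variable {K : Type*} [Field K] {t : ℕ} {n : Fin t → ℕ} {m d : ℕ}
  {C : Submodule K (∀ i, Matrix (Fin (n i)) (Fin m) K)} {U : ∀ i, Submodule K (Fin (n i) → K)}

theorem le_finrank_inf_colspWithin (hC : finrank K C = m * (∑ i, n i - d + 1))
    (hdU : d ≤ ∑ i, finrank K (U i)) :
    m * (∑ i, finrank K (U i) - d + 1) ≤ finrank K ↥(C ⊓ colspWithin U) := by
  have hUn : ∑ i, finrank K (U i) ≤ ∑ i, n i :=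
    sum_le_sum fun i _ => (Submodule.finrank_le (U i)).trans_eq (finrank_fin_fun K)
  have key := C.finrank_add_finrank_le_finrank_add_finrank_inf (colspWithin U)
  rw [hC, finrank_colspWithin, finrank_matrixTuple, ← mul_sum, ← sum_mul] at key
  have h₁ : m * (∑ i, n i - d + 1) =
      m * (∑ i, n i - ∑ i, finrank K (U i)) + m * (∑ i, finrank K (U i) - d + 1) := by
    rw [← mul_add]; congr 1; omega
  have h₂ : (∑ i, n i) * m =
      m * (∑ i, n i - ∑ i, finrank K (U i)) + m * ∑ i, finrank K (U i) := by
    rw [← mul_add, mul_comm]; congr 1; omega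
  omega

theorem finrank_inf_colspWithin_le (hmin : ∀ X ∈ C, X ≠ 0 → d ≤ srk X) (hd : 0 < d)
    (hdU : d ≤ ∑ i, finrank K (U i)) :
    finrank K ↥(C ⊓ colspWithin U) ≤ m * (∑ i, finrank K (U i) - d + 1) := by
  obtain ⟨U', hU'U, hU'⟩ := exists_le_sum_finrank_eq U (s := d - 1) (by omega)
  have key := C.finrank_inf_add_finrank_le_of_le (colspWithin_mono (m := fun _ => m) hU'U)
  rw [inf_colspWithin_eq_bot (U := U') hmin (by omega), finrank_bot, finrank_colspWithin,
    finrank_colspWithin, ← mul_sum, ← mul_sum, hU'] at key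
  have : m * ∑ i, finrank K (U i) = m * (d - 1) + m * (∑ i, finrank K (U i) - d + 1) := by
    rw [← mul_add]; congr 1; omega
  omega

end UniformColumns

theorem MSRD_shortening_card_general (Fq : Type) [Field Fq] [Fintype Fq]
    (t : ℕ) (n : Fin t → ℕ) (m : ℕ)
    (C : Submodule Fq (∀ i, Matrix (Fin (n i)) (Fin ((fun _ => m) i)) Fq))
    (d : ℕ)
    (hd : IsLeast {r | ∃ X ∈ C, X ≠ 0 ∧ srk X = r} d)
    (hMSRD : Nat.card ↥(C : Set (∀ i, Matrix (Fin (n i)) (Fin ((fun _ => m) i)) Fq))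
      = (Fintype.card Fq) ^ (m * ((∑ i, n i) - d + 1)))
    (U : ∀ i, Submodule Fq (Fin (n i) → Fq)) :
    ((∑ i, Module.finrank Fq (U i)) < d →
      Nat.card ↥(shorten
        (C : Set (∀ i, Matrix (Fin (n i)) (Fin ((fun _ => m) i)) Fq)) U) = 1) ∧
    (d ≤ ∑ i, Module.finrank Fq (U i) →
      Nat.card ↥(shorten
          (C : Set (∀ i, Matrix (Fin (n i)) (Fin ((fun _ => m) i)) Fq)) U)
        = (Fintype.card Fq) ^ (m * ((∑ i, Module.finrank Fq (U i)) - d + 1))) := by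
  obtain ⟨⟨X₀, hX₀C, hX₀, hX₀d⟩, hle⟩ := hd
  have hmin : ∀ X ∈ C, X ≠ 0 → d ≤ srk X := fun X hXC hX => hle ⟨X, hXC, hX, rfl⟩
  have hd_pos : 0 < d := hX₀d ▸ Nat.pos_of_ne_zero (mt srk_eq_zero_iff.1 hX₀)
  have hC : finrank Fq C = m * (∑ i, n i - d + 1) := by
    refine Nat.pow_right_injective (Fintype.one_lt_card (α := Fq)) ?_
    dsimp only
    rw [← hMSRD, natCard_eq_pow_finrank (K := Fq), Nat.card_eq_fintype_card]
    rfl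
  rw [shorten_eq_inf_colspWithin, SetLike.coe_sort_coe, natCard_eq_pow_finrank (K := Fq),
    Nat.card_eq_fintype_card]
  refine ⟨fun hU => ?_, fun hU => ?_⟩
  · rw [inf_colspWithin_eq_bot hmin hU, finrank_bot, pow_zero]
  · exact congrArg _ (le_antisymm (finrank_inf_colspWithin_le hmin hd_pos hU)
      (le_finrank_inf_colspWithin hC hU))

/-- for a nonzero MSRD code `C` (all blocks with `m` columns) of minimum
sum-rank distance `d` and any tuple `U` with total dimension `u`: `|C(U)| = 1` if
`u < d`, and `|C(U)| = q^{m(u - d + 1)}` if `u ≥ d`. -/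
theorem MSRD_shortening_card (Fq : Type) [Field Fq] [Fintype Fq]
    (t : ℕ) (n : Fin t → ℕ) (m : ℕ) (hnm : ∀ i, 1 ≤ n i ∧ n i ≤ m)
    (C : Submodule Fq (∀ i, Matrix (Fin (n i)) (Fin ((fun _ => m) i)) Fq))
    (hC : C ≠ ⊥) (d : ℕ)
    (hd : IsLeast {r | ∃ X ∈ C, X ≠ 0 ∧ srk X = r} d)
    (hMSRD : Nat.card ↥(C : Set (∀ i, Matrix (Fin (n i)) (Fin ((fun _ => m) i)) Fq))
      = (Fintype.card Fq) ^ (m * ((∑ i, n i) - d + 1)))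
    (U : ∀ i, Submodule Fq (Fin (n i) → Fq)) :
    ((∑ i, Module.finrank Fq (U i)) < d →
      Nat.card ↥(shorten
        (C : Set (∀ i, Matrix (Fin (n i)) (Fin ((fun _ => m) i)) Fq)) U) = 1) ∧
    (d ≤ ∑ i, Module.finrank Fq (U i) →
      Nat.card ↥(shorten
          (C : Set (∀ i, Matrix (Fin (n i)) (Fin ((fun _ => m) i)) Fq)) U)
        = (Fintype.card Fq) ^ (m * ((∑ i, Module.finrank Fq (U i)) - d + 1))) :=
  MSRD_shortening_card_general Fq t n m C d hd hMSRD U
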